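/- Let v ≥ 1 and N > v be integers, and let d_1, …, d_v be nonnegative integers, not all zero. Then Σ_{1≤j,k≤v} B(d_j − d_k) − N · Σ_{j=1}^{v} B(d_j) < (v − N) · Σ_{j=1}^{v} d_j, where B(m) = m(m+1)/2 for integers m ≥ 0 and B(m) = 0 for m < 0. -/

import Mathlib

/-- `Bb m = m(m+1)/2` for `m ≥ 0` and `Bb m = 0` for `m < 0`;
equivalently `Bb m` is the binomial coefficient `C(m+1, 2)` with the
convention `C(a, 2) = 0` for `a ≤ 0`. -/
def Bb (m : ℤ) : ℤ := if 0 ≤ m then m * (m + 1) / 2 else 0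

/-!
Write `S = Σ_j B(d_j)` and `D = Σ_j d_j`. Since `B` is monotone, `B(0) = 0` and `d_k ≥ 0`,
each inner sum `Σ_k B(d_j - d_k)` is at most `(v - 1) B(d_j)`, so the left-hand side is at most
`(v - 1 - N) S`. As `v - 1 - N < 0` and `m ≤ B(m)` for `m ≥ 0`, this is at most `(v - 1 - N) D`,
which is less than `(v - N) D` because `D > 0`.
-/

lemma Bb_zero : Bb 0 = 0 := by simp [Bb]

lemma Bb_nonneg (m : ℤ) : 0 ≤ Bb m := by
  unfold Bb
  split_ifs with hm
  · exact Int.ediv_nonneg (by nlinarith) (by norm_num)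
  · exact le_rfl

lemma Bb_monotone : Monotone Bb := by
  intro a b hab
  by_cases ha : 0 ≤ a
  · simp only [Bb, if_pos ha, if_pos (ha.trans hab)]
    exact Int.ediv_le_ediv (by norm_num) (by nlinarith)
  · simpa [Bb, ha] using Bb_nonneg b

lemma self_le_Bb {m : ℤ} (hm : 0 ≤ m) : m ≤ Bb m := by
  rw [Bb, if_pos hm, Int.le_ediv_iff_mul_le (by norm_num)]
  rcases hm.eq_or_lt with rfl | hpos
  · simp
  · nlinarith

section SumBb

variable {ι : Type*} [Fintype ι] [DecidableEq ι] (d : ι → ℤ)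

lemma sum_Bb_sub_le (hd : ∀ i, 0 ≤ d i) (j : ι) :
    ∑ k, Bb (d j - d k) ≤ (Fintype.card ι - 1 : ℤ) * Bb (d j) := by
  rw [← Finset.add_sum_erase _ _ (Finset.mem_univ j), sub_self, Bb_zero, zero_add]
  calc ∑ k ∈ Finset.univ.erase j, Bb (d j - d k)
      ≤ ∑ _k ∈ Finset.univ.erase j, Bb (d j) :=
        Finset.sum_le_sum fun k _ => Bb_monotone (sub_le_self _ (hd k))
    _ = (Fintype.card ι - 1 : ℤ) * Bb (d j) := by
        rw [Finset.sum_const, Finset.card_erase_of_mem (Finset.mem_univ j), Finset.card_univ,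
          nsmul_eq_mul, Nat.cast_pred (Fintype.card_pos_iff.mpr ⟨j⟩)]

lemma sum_sum_Bb_sub_le (hd : ∀ i, 0 ≤ d i) :
    ∑ j, ∑ k, Bb (d j - d k) ≤ (Fintype.card ι - 1 : ℤ) * ∑ j, Bb (d j) := by
  rw [Finset.mul_sum]
  exact Finset.sum_le_sum fun j _ => sum_Bb_sub_le d hd j

end SumBb

theorem sum_B_sub_lt_of_lt_general (v N : ℕ) (hN : v < N)
    (d : Fin v → ℕ) (hd : ∃ j, d j ≠ 0) :
    (∑ j, ∑ k, Bb ((d j : ℤ) - (d k : ℤ))) - (N : ℤ) * ∑ j, Bb (d j : ℤ)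
      < ((v : ℤ) - (N : ℤ)) * ∑ j, (d j : ℤ) := by
  have hd_nonneg : ∀ j, (0 : ℤ) ≤ d j := fun j => Int.natCast_nonneg _
  have hT := sum_sum_Bb_sub_le (fun j => (d j : ℤ)) hd_nonneg
  rw [Fintype.card_fin] at hT
  have hDS : ∑ j, (d j : ℤ) ≤ ∑ j, Bb (d j) :=
    Finset.sum_le_sum fun j _ => self_le_Bb (hd_nonneg j)
  have hD : 0 < ∑ j, (d j : ℤ) := by
    obtain ⟨j, hj⟩ := hd
    exact Finset.sum_pos' (fun j _ => hd_nonneg j) ⟨j, Finset.mem_univ j, by omega⟩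
  have hNv : (v : ℤ) < N := by exact_mod_cast hN
  calc _ ≤ ((v : ℤ) - 1 - N) * ∑ j, Bb (d j) := by linarith
    _ ≤ ((v : ℤ) - 1 - N) * ∑ j, (d j : ℤ) := mul_le_mul_of_nonpos_left hDS (by linarith)
    _ < ((v : ℤ) - N) * ∑ j, (d j : ℤ) := by linarith

/-- If `v ≥ 1`, `N > v`, and `d_1, …, d_v` are nonnegative integers, not all zero,
then `Σ_{1≤j,k≤v} B(d_j − d_k) − N · Σ_j B(d_j) < (v − N) · Σ_j d_j`. -/
theorem sum_B_sub_lt_of_lt (v N : ℕ) (hv : 1 ≤ v) (hN : v < N)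
    (d : Fin v → ℕ) (hd : ∃ j, d j ≠ 0) :
    (∑ j, ∑ k, Bb ((d j : ℤ) - (d k : ℤ))) - (N : ℤ) * ∑ j, Bb (d j : ℤ)
      < ((v : ℤ) - (N : ℤ)) * ∑ j, (d j : ℤ) :=
  sum_B_sub_lt_of_lt_general v N hN d hd
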